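/- arXiv:0909.2467 — 5 statements merged into one kernel-verified Lean document; each statement's English description precedes it below -/
import Mathlib

section
/- If G is a simple graph on n vertices with more than (1 - 1/(k-1)) · n²/2 edges, then G contains a complete subgraph on k vertices. -/
/-!
A `k`-clique-free graph has at most as many edges as the Turán graph `T(n, k - 1)`, the
Turán-maximal `k`-clique-free graph on `n` vertices, and `T(n, r)` has at most
`(1 - 1/r) n² / 2` edges, the part sizes being as equal as possible.
-/

open Finset

namespace SimpleGraph

theorem CliqueFree.mul_card_edgeFinset_le {V : Type*} [Fintype V] {G : SimpleGraph V}
    [DecidableRel G.Adj] {r : ℕ} (hr : 0 < r) (cf : G.CliqueFree (r + 1)) :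
    2 * r * #G.edgeFinset ≤ (r - 1) * Fintype.card V ^ 2 := by
  obtain ⟨H, _, maxH⟩ := exists_isTuranMaximal (V := V) hr
  have hiso := ((isTuranMaximal_iff_nonempty_iso_turanGraph hr).mp maxH).some
  calc 2 * r * #G.edgeFinset ≤ 2 * r * #H.edgeFinset := Nat.mul_le_mul_left _ (maxH.2 cf)
    _ = 2 * r * #(turanGraph (Fintype.card V) r).edgeFinset := by rw [hiso.card_edgeFinset_eq]
    _ ≤ (r - 1) * Fintype.card V ^ 2 := mul_card_edgeFinset_turanGraph_le

end SimpleGraph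

theorem stmt_0_general {V : Type*} [Fintype V] (G : SimpleGraph V)
    [DecidableRel G.Adj] (n k : ℕ) (hn : Fintype.card V = n) (hk : 2 ≤ k)
    (h : ((1 : ℝ) - 1 / ((k : ℝ) - 1)) * (n : ℝ) ^ 2 / 2 < (G.edgeFinset.card : ℝ)) :
    ∃ s : Finset V, G.IsNClique k s := by
  by_contra! hcon
  obtain ⟨r, rfl⟩ : ∃ r, k = r + 1 := ⟨k - 1, by omega⟩
  have hr : 0 < r := by omega
  have hbound := (Nat.cast_le (α := ℝ)).mpr (SimpleGraph.CliqueFree.mul_card_edgeFinset_le hr hcon)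
  push_cast [Nat.cast_sub hr, hn] at hbound
  have hscale : ((1 : ℝ) - 1 / r) * (n : ℝ) ^ 2 / 2 * (2 * r) = ((r : ℝ) - 1) * (n : ℝ) ^ 2 := by
    field_simp
  push_cast at h
  rw [add_sub_cancel_right] at h
  have hpos : (0 : ℝ) < 2 * r := by positivity
  have := mul_lt_mul_of_pos_right h hpos
  rw [hscale] at this
  linarith

/-- Turán's theorem: if a simple graph on `n` vertices has more than
`(1 - 1/(k-1)) * n^2 / 2` edges, then it contains a complete subgraph on `k` vertices. -/
theorem stmt_0 {V : Type*} [Fintype V] [DecidableEq V] (G : SimpleGraph V)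
    [DecidableRel G.Adj] (n k : ℕ) (hn : Fintype.card V = n) (hk : 2 ≤ k)
    (h : ((1 : ℝ) - 1 / ((k : ℝ) - 1)) * (n : ℝ) ^ 2 / 2 < (G.edgeFinset.card : ℝ)) :
    ∃ s : Finset V, G.IsNClique k s :=
  stmt_0_general G n k hn hk h
end

section
/- If a simple graph G on n vertices contains no independent set of size k+1 (k ≥ 1), then the number of non-edges of G is at most (1 - 1/k) · n²/2. -/
open Finset

namespace SimpleGraph

variable {V : Type*} [Fintype V] {G : SimpleGraph V} [DecidableRel G.Adj] {r : ℕ}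

theorem CliqueFree.two_mul_mul_card_edgeFinset_le (hr : 0 < r) (cf : G.CliqueFree (r + 1)) :
    2 * r * #G.edgeFinset ≤ (r - 1) * Fintype.card V ^ 2 := by
  obtain ⟨H, _, maxH⟩ := exists_isTuranMaximal (V := V) hr
  obtain ⟨e⟩ := (isTuranMaximal_iff_nonempty_iso_turanGraph hr).mp maxH
  calc 2 * r * #G.edgeFinset
      ≤ 2 * r * #H.edgeFinset := Nat.mul_le_mul_left _ (maxH.2 cf)
    _ = 2 * r * #(turanGraph (Fintype.card V) r).edgeFinset := by rw [e.card_edgeFinset_eq]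
    _ ≤ (r - 1) * Fintype.card V ^ 2 := mul_card_edgeFinset_turanGraph_le

end SimpleGraph

/-- Dual Turán: if a simple graph on `n` vertices has no independent set of size `k+1`
(`k ≥ 1`), then its number of non-edges is at most `(1 - 1/k) * n^2 / 2`. -/
theorem stmt_1 {V : Type*} [Fintype V] [DecidableEq V] (G : SimpleGraph V)
    [DecidableRel G.Adj] (n k : ℕ) (hn : Fintype.card V = n) (hk : 1 ≤ k)
    (h : ∀ s : Finset V, ¬ (Gᶜ).IsNClique (k + 1) s) :
    ((Gᶜ).edgeFinset.card : ℝ) ≤ ((1 : ℝ) - 1 / (k : ℝ)) * (n : ℝ) ^ 2 / 2 := by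
  have hturan := SimpleGraph.CliqueFree.two_mul_mul_card_edgeFinset_le (G := Gᶜ) hk h
  rw [hn] at hturan
  have hkR : (0 : ℝ) < k := by exact_mod_cast hk
  have hturanR : 2 * (k : ℝ) * (Gᶜ).edgeFinset.card ≤ ((k : ℝ) - 1) * (n : ℝ) ^ 2 := by
    exact_mod_cast hturan
  rw [one_sub_div hkR.ne', div_mul_eq_mul_div, div_div, le_div_iff₀ (by positivity)]
  linarith
end

section
/- In the theory of the triangle-free random graph (the generic triangle-free graph), there exist three pairwise disjoint countably infinite sets X, Y, Z of vertices such that each of the pairs (X,Y), (Y,Z), (X,Z) is a bipartite random graph, i.e., for any finite disjoint η, ν contained in one side, the other side contains a vertex adjacent to every element of η and to no element of ν. -/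
/-- `X` is independent over `Y`: every finite adjacency/non-adjacency pattern over `Y`
is realized by some element of `X`. -/
def IndepOver {V : Type*} (G : SimpleGraph V) (X Y : Set V) : Prop :=
  ∀ η ν : Finset V, (↑η : Set V) ⊆ Y → (↑ν : Set V) ⊆ Y → Disjoint η ν →
    ∃ x ∈ X, (∀ b ∈ η, G.Adj x b) ∧ (∀ b ∈ ν, ¬ G.Adj x b)

/-- `(X,Y)` is a bipartite random graph: each side is independent over the other. -/
def BipRandom {V : Type*} (G : SimpleGraph V) (X Y : Set V) : Prop :=
  IndepOver G X Y ∧ IndepOver G Y X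

/-!
Build the parts as unions of increasing finite sets, serving one requirement at a time. To realize
a pattern `η` over the current part `t` by a new vertex of part `a`, apply the extension axiom to
the independent set `η` and to all other vertices used so far; part `a` stays independent because
the new vertex is adjacent only to `η`, which lies in the different part `t`. Enumerating all
requirements with repetition realizes every finite pattern over every part. Infinitude comes
for free: if `X` realizes all patterns over `Y` and vice versa, then `|X| ≥ 2^|Y|` and
`|Y| ≥ 2^|X|`.
-/

section

open Finset Function

variable {V : Type*} {G : SimpleGraph V}

theorem IndepOver.two_pow_card_le_ncard {X Y : Set V} (h : IndepOver G X Y) (hX : X.Finite)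
    {T : Finset V} (hT : (T : Set V) ⊆ Y) : 2 ^ #T ≤ X.ncard := by
  classical
  rw [← card_powerset, Set.ncard_eq_toFinset_card X hX]
  refine card_le_card_of_surjOn (fun x => T.filter (G.Adj x)) fun S hS => ?_
  rw [coe_powerset, Set.mem_preimage, Set.mem_powerset_iff, coe_subset] at hS
  obtain ⟨x, hx, hadj, hnadj⟩ :=
    h S (T \ S) ((coe_subset.2 hS).trans hT) ((coe_subset.2 sdiff_subset).trans hT)
      disjoint_sdiff
  refine ⟨x, hX.mem_toFinset.2 hx, ?_⟩
  ext b
  simp only [mem_filter]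
  exact ⟨fun ⟨hbT, hb⟩ => by_contra fun hbS => hnadj b (mem_sdiff.2 ⟨hbT, hbS⟩) hb,
    fun hbS => ⟨hS hbS, hadj b hbS⟩⟩

theorem BipRandom.infinite_left {X Y : Set V} (h : BipRandom G X Y) : X.Infinite := by
  intro hX
  rcases Y.finite_or_infinite with hY | hY
  · have hXY := h.1.two_pow_card_le_ncard hX (T := hY.toFinset) (by simp)
    have hYX := h.2.two_pow_card_le_ncard hY (T := hX.toFinset) (by simp)
    rw [← Set.ncard_eq_toFinset_card _ hY] at hXY
    rw [← Set.ncard_eq_toFinset_card _ hX] at hYX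
    have := X.ncard.lt_two_pow_self
    have := Y.ncard.lt_two_pow_self
    omega
  · obtain ⟨T, hTY, hT⟩ := hY.exists_subset_card_eq X.ncard
    have := h.1.two_pow_card_le_ncard hX hTY
    rw [hT] at this
    exact this.not_gt X.ncard.lt_two_pow_self

theorem exists_monotone_seq_frequently {σ R : Type*} [Preorder σ] [Countable R] [Nonempty R]
    {P : σ → Prop} (Step : R → σ → σ → Prop) {s₀ : σ} (h₀ : P s₀)
    (hstep : ∀ r s, P s → ∃ s', P s' ∧ s ≤ s' ∧ Step r s s') :
    ∃ seq : ℕ → σ, Monotone seq ∧ (∀ n, P (seq n)) ∧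
      ∀ r m, ∃ n ≥ m, Step r (seq n) (seq (n + 1)) := by
  classical
  obtain ⟨f, hf⟩ := exists_surjective_nat R
  have hnext : ∀ r s, ∃ s', P s → P s' ∧ s ≤ s' ∧ Step r s s' := fun r s =>
    if hs : P s then (hstep r s hs).imp fun _ h _ => h else ⟨s, fun h => absurd h hs⟩
  choose next hnext using hnext
  -- at stage `n` we serve the request `f n.unpair.1`, so each request is served infinitely often
  let seq : ℕ → σ := fun n => Nat.rec s₀ (fun k s => next (f k.unpair.1) s) n
  have hP : ∀ n, P (seq n) := fun n => Nat.rec h₀ (fun _ hk => (hnext _ _ hk).1) n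
  refine ⟨seq, monotone_nat_of_le_succ fun n => (hnext _ _ (hP n)).2.1, hP, fun r m => ?_⟩
  obtain ⟨i, rfl⟩ := hf r
  refine ⟨Nat.pair i m, Nat.right_le_pair i m, ?_⟩
  simpa [seq, Nat.unpair_pair] using (hnext _ _ (hP (Nat.pair i m))).2.2

/-- The extension axiom of the generic triangle-free graph. -/
def HasIndepExtension (G : SimpleGraph V) : Prop :=
  ∀ A B : Finset V, Disjoint A B → (∀ a ∈ A, ∀ a' ∈ A, a ≠ a' → ¬ G.Adj a a') →
    ∃ v, v ∉ A ∧ v ∉ B ∧ (∀ a ∈ A, G.Adj v a) ∧ (∀ b ∈ B, ¬ G.Adj v b)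

def DisjointIndepSets {ι : Type*} (G : SimpleGraph V) (s : ι → Finset V) : Prop :=
  (∀ i, G.IsIndepSet (s i : Set V)) ∧ Pairwise (Disjoint on s)

theorem DisjointIndepSets.update_insert {ι : Type*} [DecidableEq ι] [DecidableEq V]
    {s : ι → Finset V} (hs : DisjointIndepSets G s) {a : ι} {v : V} (hv : ∀ i, v ∉ s i)
    (hnadj : ∀ b ∈ s a, ¬ G.Adj v b) :
    DisjointIndepSets G (update s a (insert v (s a))) := by
  constructor
  · intro i
    rcases eq_or_ne i a with rfl | hia
    · rw [update_self, coe_insert]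
      exact (hs.1 i).insert fun b hb _ => ⟨hnadj b hb, fun h => hnadj b hb h.symm⟩
    · rw [update_of_ne hia]
      exact hs.1 i
  · intro i j hij
    simp only [onFun, update_apply]
    split_ifs with hi hj hj
    · exact absurd (hi.trans hj.symm) hij
    · exact disjoint_insert_left.2 ⟨hv j, hi ▸ hs.2 hij⟩
    · exact disjoint_insert_right.2 ⟨hv i, hj ▸ hs.2 hij⟩
    · exact hs.2 hij

theorem DisjointIndepSets.exists_extend {ι : Type*} [Fintype ι] [DecidableEq ι] [DecidableEq V]
    (hG : HasIndepExtension G) {s : ι → Finset V} (hs : DisjointIndepSets G s) {a t : ι}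
    (hat : a ≠ t) {η : Finset V} (hη : η ⊆ s t) :
    ∃ v, DisjointIndepSets G (update s a (insert v (s a))) ∧
      (∀ b ∈ η, G.Adj v b) ∧ ∀ b ∈ s t, b ∉ η → ¬ G.Adj v b := by
  obtain ⟨v, hvη, hvB, hadj, hnadj⟩ :=
    hG η (univ.biUnion s \ η) disjoint_sdiff fun x hx y hy => (hs.1 t).mono hη hx hy
  have mem_sdiff_of_mem {i : ι} {b : V} (hb : b ∈ s i) (hbη : b ∉ η) :
      b ∈ univ.biUnion s \ η :=
    mem_sdiff.2 ⟨mem_biUnion.2 ⟨i, mem_univ i, hb⟩, hbη⟩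
  have hv_new (i : ι) : v ∉ s i := fun hv => hvB (mem_sdiff_of_mem hv hvη)
  have hv_indep (b : V) (hb : b ∈ s a) : ¬ G.Adj v b :=
    hnadj b (mem_sdiff_of_mem hb fun hbη => disjoint_left.1 (hs.2 hat) hb (hη hbη))
  exact ⟨v, hs.update_insert hv_new hv_indep, hadj,
    fun b hb hbη => hnadj b (mem_sdiff_of_mem hb hbη)⟩

theorem exists_pairwise_indepOver [Countable V] {ι : Type*} [Finite ι] [Nonempty ι]
    (hG : HasIndepExtension G) :
    ∃ X : ι → Set V,
      Pairwise (Disjoint on X) ∧ Pairwise fun i j => IndepOver G (X i) (X j) := by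
  classical
  have := Fintype.ofFinite ι
  -- the request `(a, t, η)` asks for a new vertex of part `a` realizing `η` over part `t`
  obtain ⟨seq, hmono, hgood, hserved⟩ := exists_monotone_seq_frequently
    (R := ι × ι × Finset V) (P := DisjointIndepSets G)
    (fun ⟨a, t, η⟩ s s' => a ≠ t → η ⊆ s t →
      ∃ v ∈ s' a, (∀ b ∈ η, G.Adj v b) ∧ ∀ b ∈ s t, b ∉ η → ¬ G.Adj v b)
    (s₀ := fun _ => ∅) ⟨fun _ => by simp, fun _ _ _ => by simp [onFun]⟩ (by
      rintro ⟨a, t, η⟩ s hs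
      by_cases h : a ≠ t ∧ η ⊆ s t
      · obtain ⟨v, hs', hadj, hnadj⟩ := hs.exists_extend hG h.1 h.2
        exact ⟨_, hs', le_update_iff.2 ⟨subset_insert v (s a), fun _ _ => le_rfl⟩,
          fun _ _ => ⟨v, by simp, hadj, hnadj⟩⟩
      · exact ⟨s, hs, le_rfl, fun hat hη => absurd ⟨hat, hη⟩ h⟩)
  have hmono_at (i : ι) : Monotone fun n => seq n i := fun m n hmn => hmono hmn i
  refine ⟨fun i => ⋃ n, (seq n i : Set V), fun i j hij => ?_,
    fun a t hat η ν hη hν hην => ?_⟩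
  · simp only [onFun, Set.disjoint_iUnion_left, Set.disjoint_iUnion_right]
    intro m n
    exact disjoint_coe.2 <| ((hgood (max n m)).2 hij).mono
      (hmono_at i (le_max_left n m)) (hmono_at j (le_max_right n m))
  · obtain ⟨m, hm⟩ := (hmono_at t).directed_le.exists_mem_subset_of_finset_subset_biUnion
      (s := η ∪ ν) (by rw [coe_union]; exact Set.union_subset hη hν)
    obtain ⟨n, hmn, hn⟩ := hserved (a, t, η) m
    have hsub : η ∪ ν ⊆ seq n t := coe_subset.1 hm |>.trans (hmono_at t hmn)
    obtain ⟨v, hv, hadj, hnadj⟩ := hn hat (subset_union_left.trans hsub)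
    exact ⟨v, Set.mem_iUnion.2 ⟨n + 1, hv⟩, hadj, fun b hb =>
      hnadj b (hsub (mem_union_right η hb)) fun hbη => disjoint_left.1 hην hbη hb⟩

end

theorem stmt_12_general {V : Type*} [Countable V] (G : SimpleGraph V)
    (hext : ∀ A B : Finset V, Disjoint A B →
      (∀ a ∈ A, ∀ a' ∈ A, a ≠ a' → ¬ G.Adj a a') →
      ∃ v, v ∉ A ∧ v ∉ B ∧ (∀ a ∈ A, G.Adj v a) ∧ (∀ b ∈ B, ¬ G.Adj v b)) :
    ∃ X Y Z : Set V, X.Infinite ∧ Y.Infinite ∧ Z.Infinite ∧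
      Disjoint X Y ∧ Disjoint Y Z ∧ Disjoint X Z ∧
      BipRandom G X Y ∧ BipRandom G Y Z ∧ BipRandom G X Z := by
  obtain ⟨X, hdisj, hindep⟩ := exists_pairwise_indepOver (ι := Fin 3) hext
  have hbip {i j : Fin 3} (hij : i ≠ j) : BipRandom G (X i) (X j) :=
    ⟨hindep hij, hindep hij.symm⟩
  have hinf (i : Fin 3) : (X i).Infinite :=
    let ⟨_, hij⟩ := exists_ne i
    (hbip hij.symm).infinite_left
  exact ⟨X 0, X 1, X 2, hinf 0, hinf 1, hinf 2, hdisj (by decide), hdisj (by decide),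
    hdisj (by decide), hbip (by decide), hbip (by decide), hbip (by decide)⟩

/-- In the triangle-free random graph there are pairwise disjoint countably infinite
sets `X, Y, Z` such that each of `(X,Y)`, `(Y,Z)`, `(X,Z)` is a bipartite random graph. -/
theorem stmt_12 {V : Type*} [Countable V] (G : SimpleGraph V)
    (htf : G.CliqueFree 3)
    (hext : ∀ A B : Finset V, Disjoint A B →
      (∀ a ∈ A, ∀ a' ∈ A, a ≠ a' → ¬ G.Adj a a') →
      ∃ v, v ∉ A ∧ v ∉ B ∧ (∀ a ∈ A, G.Adj v a) ∧ (∀ b ∈ B, ¬ G.Adj v b)) :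
    ∃ X Y Z : Set V, X.Infinite ∧ Y.Infinite ∧ Z.Infinite ∧
      Disjoint X Y ∧ Disjoint Y Z ∧ Disjoint X Z ∧
      BipRandom G X Y ∧ BipRandom G Y Z ∧ BipRandom G X Z :=
  stmt_12_general G hext
end

section
/- Triangle counting lemma: let X, Y, Z be disjoint finite vertex sets in a graph such that each pair (X,Y), (Y,Z), (X,Z) is ε-regular with density at least δ, where δ ≥ 2ε > 0. Then the number of triangles (x,y,z) ∈ X × Y × Z with x,y,z pairwise adjacent is at least (1 - 2ε)(δ - ε)³ |X| |Y| |Z|. -/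
/-- Number of edges between `A` and `B`. -/
def crossEdges {V : Type*} [DecidableEq V] (G : SimpleGraph V) [DecidableRel G.Adj]
    (A B : Finset V) : ℕ :=
  ((A ×ˢ B).filter fun p => G.Adj p.1 p.2).card

/-- Edge density between `A` and `B`. -/
noncomputable def den {V : Type*} [DecidableEq V] (G : SimpleGraph V) [DecidableRel G.Adj]
    (A B : Finset V) : ℝ :=
  (crossEdges G A B : ℝ) / ((A.card : ℝ) * (B.card : ℝ))

/-- `(A,B)` is an `ε`-regular pair. -/
def IsReg {V : Type*} [DecidableEq V] (G : SimpleGraph V) [DecidableRel G.Adj]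
    (ε : ℝ) (A B : Finset V) : Prop :=
  ∀ A' ⊆ A, ∀ B' ⊆ B, ε * A.card ≤ (A'.card : ℝ) → ε * B.card ≤ (B'.card : ℝ) →
    |den G A' B' - den G A B| < ε

/-!
Regularity of `(X, Y)` and `(X, Z)` forces all but `2ε|X|` vertices `x ∈ X` to have at least
`(δ - ε)|Y|` neighbours in `Y` and `(δ - ε)|Z|` in `Z`. These neighbourhoods are large enough for
the regularity of `(Y, Z)` to apply to them, so they span at least
`(δ - ε) · (δ - ε)|Y| · (δ - ε)|Z|` edges, each closing a triangle through `x`.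
-/

open Finset

section TriangleCounting

variable {V : Type*} [DecidableEq V] (G : SimpleGraph V) [DecidableRel G.Adj] {ε : ℝ}
  {s t u : Finset V}

lemma crossEdges_eq_sum_card_neighbors (s t : Finset V) :
    crossEdges G s t = ∑ x ∈ s, #{y ∈ t | G.Adj x y} := by
  simp only [crossEdges, card_filter, sum_product]

lemma crossEdges_eq_den_mul (s t : Finset V) :
    (crossEdges G s t : ℝ) = den G s t * #s * #t := by
  rcases s.eq_empty_or_nonempty with rfl | hs
  · simp [crossEdges]
  rcases t.eq_empty_or_nonempty with rfl | ht
  · simp [crossEdges]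
  rw [den, mul_assoc, div_mul_cancel₀ _ (by positivity)]

lemma den_le_one (s t : Finset V) : den G s t ≤ 1 := by
  refine div_le_one_of_le₀ ?_ (by positivity)
  exact_mod_cast (card_filter_le _ _).trans (card_product s t).le

lemma card_triangles_eq_sum_crossEdges (s t u : Finset V) :
    #{p ∈ s ×ˢ t ×ˢ u | G.Adj p.1 p.2.1 ∧ G.Adj p.2.1 p.2.2 ∧ G.Adj p.1 p.2.2} =
      ∑ x ∈ s, crossEdges G {y ∈ t | G.Adj x y} {z ∈ u | G.Adj x z} := by
  rw [card_filter, sum_product]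
  refine sum_congr rfl fun x _ => ?_
  rw [← card_filter, crossEdges]
  congr 1
  ext ⟨y, z⟩
  simp only [mem_filter, mem_product]
  tauto

lemma IsReg.pos (hr : IsReg G ε s t) : 0 < ε := by
  by_contra! hε
  have hs : ε * #s ≤ (#s : ℝ) := by nlinarith [Nat.cast_nonneg (α := ℝ) #s]
  have ht : ε * #t ≤ (#t : ℝ) := by nlinarith [Nat.cast_nonneg (α := ℝ) #t]
  have := hr s Subset.rfl t Subset.rfl hs ht
  rw [sub_self, abs_zero] at this
  linarith

lemma IsReg.sub_mul_le_crossEdges (hr : IsReg G ε s t) {s' t' : Finset V} (hs' : s' ⊆ s)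
    (ht' : t' ⊆ t) (hs : ε * #s ≤ (#s' : ℝ)) (ht : ε * #t ≤ (#t' : ℝ)) :
    (den G s t - ε) * #s' * #t' ≤ crossEdges G s' t' := by
  have hden : den G s t - ε < den G s' t' := by
    linarith [(abs_sub_lt_iff.1 (hr s' hs' t' ht' hs ht)).2]
  rw [crossEdges_eq_den_mul, mul_assoc, mul_assoc]
  exact mul_le_mul_of_nonneg_right hden.le (by positivity)

noncomputable def lowDegree (ε : ℝ) (s t : Finset V) : Finset V :=
  {x ∈ s | (#{y ∈ t | G.Adj x y} : ℝ) < (den G s t - ε) * #t}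

lemma card_lowDegree_le (hε : ε ≤ 1) (hr : IsReg G ε s t) :
    (#(lowDegree G ε s t) : ℝ) ≤ ε * #s := by
  by_contra! hlarge
  set L := lowDegree G ε s t
  have hL : L.Nonempty := by
    rw [← card_pos, ← Nat.cast_pos (α := ℝ)]
    nlinarith [hr.pos, Nat.cast_nonneg (α := ℝ) #s]
  have hupper : (crossEdges G L t : ℝ) < #L * ((den G s t - ε) * #t) := by
    rw [crossEdges_eq_sum_card_neighbors, Nat.cast_sum, ← nsmul_eq_mul, ← sum_const]
    exact sum_lt_sum_of_nonempty hL fun x hx => (mem_filter.1 hx).2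
  have hlower : (den G s t - ε) * #L * #t ≤ crossEdges G L t :=
    hr.sub_mul_le_crossEdges G (filter_subset _ s) Subset.rfl hlarge.le
      (by nlinarith [Nat.cast_nonneg (α := ℝ) #t])
  linarith

lemma le_card_sdiff_lowDegree (hε : ε ≤ 1) (hst : IsReg G ε s t) (hsu : IsReg G ε s u) :
    (1 - 2 * ε) * #s ≤ (#(s \ (lowDegree G ε s t ∪ lowDegree G ε s u)) : ℝ) := by
  have hcard : #s ≤ #(s \ (lowDegree G ε s t ∪ lowDegree G ε s u)) +
      (#(lowDegree G ε s t) + #(lowDegree G ε s u)) :=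
    card_le_card_sdiff_add_card.trans (Nat.add_le_add_left (card_union_le _ _) _)
  have hcard' := (Nat.cast_le (α := ℝ)).2 hcard
  push_cast at hcard'
  linarith [card_lowDegree_le G hε hst, card_lowDegree_le G hε hsu]

lemma le_crossEdges_neighbors {δ : ℝ} {x : V} (hδ : 2 * ε ≤ δ) (hst : δ ≤ den G s t)
    (hsu : δ ≤ den G s u) (htu : δ ≤ den G t u) (hr : IsReg G ε t u) (hx : x ∈ s)
    (hxt : x ∉ lowDegree G ε s t) (hxu : x ∉ lowDegree G ε s u) :
    (δ - ε) ^ 3 * #t * #u ≤ crossEdges G {y ∈ t | G.Adj x y} {z ∈ u | G.Adj x z} := by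
  have hεδ : 0 ≤ δ - ε := by linarith [hr.pos]
  have hNt : (δ - ε) * #t ≤ (#{y ∈ t | G.Adj x y} : ℝ) := by
    simp only [lowDegree, mem_filter, hx, true_and, not_lt] at hxt
    exact le_trans (by gcongr) hxt
  have hNu : (δ - ε) * #u ≤ (#{z ∈ u | G.Adj x z} : ℝ) := by
    simp only [lowDegree, mem_filter, hx, true_and, not_lt] at hxu
    exact le_trans (by gcongr) hxu
  have hNt' : ε * #t ≤ (#{y ∈ t | G.Adj x y} : ℝ) := le_trans (by gcongr; linarith) hNt
  have hNu' : ε * #u ≤ (#{z ∈ u | G.Adj x z} : ℝ) := le_trans (by gcongr; linarith) hNu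
  calc (δ - ε) ^ 3 * #t * #u = (δ - ε) * ((δ - ε) * #t) * ((δ - ε) * #u) := by ring
    _ ≤ (δ - ε) * #{y ∈ t | G.Adj x y} * #{z ∈ u | G.Adj x z} := by gcongr
    _ ≤ (den G t u - ε) * #{y ∈ t | G.Adj x y} * #{z ∈ u | G.Adj x z} := by gcongr
    _ ≤ crossEdges G {y ∈ t | G.Adj x y} {z ∈ u | G.Adj x z} :=
        hr.sub_mul_le_crossEdges G (filter_subset _ t) (filter_subset _ u) hNt' hNu'

end TriangleCounting

theorem stmt_14_general {V : Type*} [DecidableEq V] (G : SimpleGraph V) [DecidableRel G.Adj]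
    (X Y Z : Finset V) (ε δ : ℝ) (hδ : 2 * ε ≤ δ)
    (hrXY : IsReg G ε X Y) (hrYZ : IsReg G ε Y Z) (hrXZ : IsReg G ε X Z)
    (hdXY : δ ≤ den G X Y) (hdYZ : δ ≤ den G Y Z) (hdXZ : δ ≤ den G X Z) :
    (1 - 2 * ε) * (δ - ε) ^ 3 * X.card * Y.card * Z.card ≤
      (((X ×ˢ Y ×ˢ Z).filter fun p =>
        G.Adj p.1 p.2.1 ∧ G.Adj p.2.1 p.2.2 ∧ G.Adj p.1 p.2.2).card : ℝ) := by
  have hε1 : ε ≤ 1 := by linarith [den_le_one G X Y, hrXY.pos]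
  have hεδ : 0 ≤ δ - ε := by linarith [hrXY.pos]
  set good := X \ (lowDegree G ε X Y ∪ lowDegree G ε X Z)
  rw [card_triangles_eq_sum_crossEdges, Nat.cast_sum]
  calc (1 - 2 * ε) * (δ - ε) ^ 3 * #X * #Y * #Z
      = ((1 - 2 * ε) * #X) * ((δ - ε) ^ 3 * #Y * #Z) := by ring
    _ ≤ #good * ((δ - ε) ^ 3 * #Y * #Z) := by
        gcongr
        exact le_card_sdiff_lowDegree G hε1 hrXY hrXZ
    _ ≤ ∑ x ∈ good, (crossEdges G {y ∈ Y | G.Adj x y} {z ∈ Z | G.Adj x z} : ℝ) := by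
        rw [← nsmul_eq_mul]
        refine card_nsmul_le_sum _ _ _ fun x hx => ?_
        simp only [good, mem_sdiff, mem_union, not_or] at hx
        exact le_crossEdges_neighbors G hδ hdXY hdXZ hdYZ hrYZ hx.1 hx.2.1 hx.2.2
    _ ≤ _ := sum_le_sum_of_subset_of_nonneg sdiff_subset fun _ _ _ => Nat.cast_nonneg _

/-- Triangle counting lemma: if `X, Y, Z` are pairwise `ε`-regular with densities at
least `δ ≥ 2ε > 0`, the number of triangles with one vertex in each set is at least
`(1 - 2ε)(δ - ε)³|X||Y||Z|`. -/
theorem stmt_14 {V : Type*} [DecidableEq V] (G : SimpleGraph V) [DecidableRel G.Adj]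
    (X Y Z : Finset V) (hXY : Disjoint X Y) (hYZ : Disjoint Y Z) (hXZ : Disjoint X Z)
    (ε δ : ℝ) (hε : 0 < ε) (hδ : 2 * ε ≤ δ)
    (hrXY : IsReg G ε X Y) (hrYZ : IsReg G ε Y Z) (hrXZ : IsReg G ε X Z)
    (hdXY : δ ≤ den G X Y) (hdYZ : δ ≤ den G Y Z) (hdXZ : δ ≤ den G X Z) :
    (1 - 2 * ε) * (δ - ε) ^ 3 * X.card * Y.card * Z.card ≤
      (((X ×ˢ Y ×ˢ Z).filter fun p =>
        G.Adj p.1 p.2.1 ∧ G.Adj p.2.1 p.2.2 ∧ G.Adj p.1 p.2.2).card : ℝ) :=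
  stmt_14_general G X Y Z ε δ hδ hrXY hrYZ hrXZ hdXY hdYZ hdXZ
end

section
/- Let G be a triangle-free graph and S = ⟨(a_i, b_i, c_i) : i < n⟩ a sequence of triples of vertices such that for all j ≤ i: b_i is adjacent to a_j, c_i is adjacent to b_j, and a_{i+1} is adjacent to c_j. Define (x,y,z) <_ℓ (x',y',z') iff x is adjacent to y', y is adjacent to z', and z is adjacent to x'. Then there is no triple t = (x,y,z) of vertices of G and indices i < j such that t <_ℓ (a_i,b_i,c_i), (a_i,b_i,c_i) <_ℓ (a_j,b_j,c_j), and (a_j,b_j,c_j) <_ℓ t. -/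
/-- The relation `<_ℓ` on triples: `(x,y,z) <_ℓ (x',y',z')` iff `x R y'`, `y R z'`,
`z R x'`. -/
def ltL {V : Type*} (G : SimpleGraph V) (t t' : V × V × V) : Prop :=
  G.Adj t.1 t'.2.1 ∧ G.Adj t.2.1 t'.2.2 ∧ G.Adj t.2.2 t'.1

theorem ltL_not_cycle_three {V : Type*} {G : SimpleGraph V} (hG : G.CliqueFree 3)
    {s t u : V × V × V} (hst : ltL G s t) (htu : ltL G t u) (hus : ltL G u s) : False := by
  classical
  exact hG {s.1, t.2.1, u.2.2}
    (SimpleGraph.is3Clique_triple_iff.mpr ⟨hst.1, hus.2.2.symm, htu.2.1⟩)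

theorem stmt_15_general {V : Type*} (G : SimpleGraph V) (htf : G.CliqueFree 3)
    (n : ℕ) (a b c : ℕ → V) :
    ¬ ∃ (t : V × V × V) (i j : ℕ), i < j ∧ j < n ∧
        ltL G t (a i, b i, c i) ∧
        ltL G (a i, b i, c i) (a j, b j, c j) ∧
        ltL G (a j, b j, c j) t := by
  rintro ⟨t, i, j, -, -, hti, hij, hjt⟩
  exact ltL_not_cycle_three htf hti hij hjt

/-- In a triangle-free graph, given a sequence of triples as in Example `expl-rg`
(each row adjacent to all earlier rows coordinatewise in the helical pattern), there is
no triple `t` and indices `i < j` forming a `<_ℓ`-cycle `t <_ℓ s_i <_ℓ s_j <_ℓ t`. -/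
theorem stmt_15 {V : Type*} (G : SimpleGraph V) (htf : G.CliqueFree 3)
    (n : ℕ) (a b c : ℕ → V)
    (hba : ∀ i j, j ≤ i → i < n → G.Adj (b i) (a j))
    (hcb : ∀ i j, j ≤ i → i < n → G.Adj (c i) (b j))
    (hac : ∀ i j, j ≤ i → i + 1 < n → G.Adj (a (i + 1)) (c j)) :
    ¬ ∃ (t : V × V × V) (i j : ℕ), i < j ∧ j < n ∧
        ltL G t (a i, b i, c i) ∧
        ltL G (a i, b i, c i) (a j, b j, c j) ∧
        ltL G (a j, b j, c j) t :=
  stmt_15_general G htf n a b c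
end
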